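/- arXiv:1812.08470 — 8 statements merged into one kernel-verified Lean document; each statement's English description precedes it below -/
import Mathlib

section
/- Let 𝕊 ⊆ ℝ^ℓ (ℓ ≥ 2) be a state space such that for every n and every nonempty bounded set X ⊆ ℝⁿ whose affine span has dimension at most ℓ − 1, ddi(X | 𝕊) is a singleton. Then for every such X and every orthogonal linear map U : ℝⁿ → ℝⁿ with U(X) = X, the unique element Y of ddi(X | 𝕊) satisfies U(Y) = Y. -/
open MeasureTheory Metric Set

noncomputable section

/-- `Euc n` is the Euclidean space `ℝⁿ`. -/
abbrev Euc (n : ℕ) : Type := EuclideanSpace ℝ (Fin n)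

/-- A state space of linear dimension `ℓ`: a compact convex set contained in (and affinely
spanning) an affine hyperplane not through the origin, here written as `{x | f x = 1}`
for a nonzero linear functional `f`. -/
def IsStateSpace {ℓ : ℕ} (𝕊 : Set (Euc ℓ)) : Prop :=
  IsCompact 𝕊 ∧ Convex ℝ 𝕊 ∧
    ∃ f : Euc ℓ →ₗ[ℝ] ℝ, f ≠ 0 ∧
      (affineSpan ℝ 𝕊 : Set (Euc ℓ)) = {x | f x = 1}

/-- `R` is admissible for the data set `X` (w.r.t. the state space `𝕊`): it is the image of `𝕊`
under some linear map and satisfies `X ⊆ R ⊆ aff X`. -/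
def Admissible {ℓ n : ℕ} (𝕊 : Set (Euc ℓ)) (X R : Set (Euc n)) : Prop :=
  (∃ M : Euc ℓ →ₗ[ℝ] Euc n, R = M '' 𝕊) ∧ X ⊆ R ∧ R ⊆ (affineSpan ℝ X : Set (Euc n))

/-- Data-driven inference: the admissible sets for `X` of minimal `d`-dimensional Hausdorff
measure, where `d = dim aff X`. -/
def ddi {ℓ n : ℕ} (X : Set (Euc n)) (𝕊 : Set (Euc ℓ)) : Set (Set (Euc n)) :=
  {R | Admissible 𝕊 X R ∧ ∀ R' : Set (Euc n), Admissible 𝕊 X R' →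
      μH[(Module.finrank ℝ (affineSpan ℝ X).direction : ℝ)] R ≤
        μH[(Module.finrank ℝ (affineSpan ℝ X).direction : ℝ)] R'}

/-- A (hyper)-ellipsoid state space in `ℝ^ℓ`: the image of the closed unit ball of `ℝ^(ℓ-1)`
under an injective affine map. -/
def IsHyperEllipsoid {ℓ : ℕ} (𝕊 : Set (Euc ℓ)) : Prop :=
  ∃ F : Euc (ℓ - 1) →ᵃ[ℝ] Euc ℓ, Function.Injective F ∧ 𝕊 = F '' closedBall 0 1

/-! The symmetric image `U(Y)` is again admissible and has the same Hausdorff measure as `Y`,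
so it also lies in `ddi(X | 𝕊)`; uniqueness then forces `U(Y) = Y`. -/

theorem AffineMap.image_affineSpan {k V₁ P₁ V₂ P₂ : Type*} [Ring k] [AddCommGroup V₁] [Module k V₁]
    [AddTorsor V₁ P₁] [AddCommGroup V₂] [Module k V₂] [AddTorsor V₂ P₂]
    (f : P₁ →ᵃ[k] P₂) (s : Set P₁) :
    f '' (affineSpan k s : Set P₁) = affineSpan k (f '' s) := by
  rw [← AffineSubspace.map_span, AffineSubspace.coe_map]

theorem Admissible.image {ℓ n m : ℕ} {𝕊 : Set (Euc ℓ)} {X R : Set (Euc n)}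
    (hR : Admissible 𝕊 X R) (f : Euc n →ₗ[ℝ] Euc m) : Admissible 𝕊 (f '' X) (f '' R) := by
  obtain ⟨⟨M, hM⟩, hXR, hRX⟩ := hR
  refine ⟨⟨f ∘ₗ M, by rw [hM, LinearMap.coe_comp, image_comp]⟩, image_mono hXR, ?_⟩
  calc f '' R ⊆ f '' (affineSpan ℝ X : Set (Euc n)) := image_mono hRX
    _ = affineSpan ℝ (f '' X) := f.toAffineMap.image_affineSpan X

theorem image_mem_ddi_of_image_eq {ℓ n : ℕ} {𝕊 : Set (Euc ℓ)} {X R : Set (Euc n)}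
    (U : Euc n ≃ₗᵢ[ℝ] Euc n) (hUX : U '' X = X) (hR : R ∈ ddi X 𝕊) : U '' R ∈ ddi X 𝕊 := by
  obtain ⟨hadm, hmin⟩ := hR
  refine ⟨hUX ▸ hadm.image (U : Euc n →ₗ[ℝ] Euc n), fun R' hR' => ?_⟩
  rw [← U.coe_toIsometryEquiv, IsometryEquiv.hausdorffMeasure_image]
  exact hmin R' hR'

theorem stmt_1_general {ℓ : ℕ} (𝕊 : Set (Euc ℓ)) :
    ∀ (n : ℕ) (X : Set (Euc n)), X.Nonempty → Bornology.IsBounded X →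
      Module.finrank ℝ (affineSpan ℝ X).direction ≤ ℓ - 1 →
      ∀ U : Euc n ≃ₗᵢ[ℝ] Euc n, U '' X = X →
      ∀ Y : Set (Euc n), ddi X 𝕊 = {Y} → U '' Y = Y := by
  intro n X _ _ _ U hUX Y hY
  have hYmem : Y ∈ ddi X 𝕊 := hY ▸ rfl
  simpa only [hY, mem_singleton_iff] using image_mem_ddi_of_image_eq U hUX hYmem

theorem stmt_1 {ℓ : ℕ} (hℓ : 2 ≤ ℓ) (𝕊 : Set (Euc ℓ)) (hS : IsStateSpace 𝕊)
    (hsing : ∀ (n : ℕ) (X : Set (Euc n)), X.Nonempty → Bornology.IsBounded X →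
      Module.finrank ℝ (affineSpan ℝ X).direction ≤ ℓ - 1 →
      ∃ Y : Set (Euc n), ddi X 𝕊 = {Y}) :
    ∀ (n : ℕ) (X : Set (Euc n)), X.Nonempty → Bornology.IsBounded X →
      Module.finrank ℝ (affineSpan ℝ X).direction ≤ ℓ - 1 →
      ∀ U : Euc n ≃ₗᵢ[ℝ] Euc n, U '' X = X →
      ∀ Y : Set (Euc n), ddi X 𝕊 = {Y} → U '' Y = Y :=
  stmt_1_general 𝕊
end
end

section
/- Let 𝕊 ⊆ ℝ^ℓ (ℓ ≥ 2) be a state space. Suppose that for every n and every nonempty compact set X ⊆ ℝⁿ whose affine span has dimension at most ℓ − 1, the set ddi(X | 𝕊) is nonempty, and every Y ∈ ddi(X | 𝕊) satisfies U(Y) = Y for every orthogonal linear map U : ℝⁿ → ℝⁿ with U(X) = X. Then 𝕊 is a (hyper)-ellipsoid. -/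
open MeasureTheory Metric Set

noncomputable section

/-!
Take for `X` the closed unit ball of `ℝ^(ℓ-1)` and `Y = M(𝕊) ∈ ddi(X | 𝕊)`. Every orthogonal
map fixes `X`, hence `Y`; a compact convex set invariant under all orthogonal maps contains, with
a point of maximal norm `r`, the whole sphere of radius `r` (reflections act transitively on it)
and so is the ball of radius `r`. After rescaling, `M` maps `𝕊` onto the unit ball. This image
is full-dimensional and `dim ker f = ℓ - 1`, so `M` is injective on the hyperplane `{f = 1}`, and
inverting it there exhibits `𝕊` as an affine image of the unit ball.
-/

open scoped Pointwise

theorem sphere_subset_of_forall_image_subset {E : Type*} [NormedAddCommGroup E]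
    [InnerProductSpace ℝ E] {Y : Set E} (hY : ∀ U : E ≃ₗᵢ[ℝ] E, U '' Y ⊆ Y) {y : E}
    (hy : y ∈ Y) : sphere 0 ‖y‖ ⊆ Y := by
  intro z hz
  rw [mem_sphere_zero_iff_norm] at hz
  exact hY _ ⟨y, hy, Submodule.reflection_sub hz.symm⟩

theorem exists_eq_closedBall_of_forall_image_subset {E : Type*} [NormedAddCommGroup E]
    [InnerProductSpace ℝ E] {Y : Set E} (hc : IsCompact Y) (hconv : Convex ℝ Y)
    (hne : Y.Nonempty) (hY : ∀ U : E ≃ₗᵢ[ℝ] E, U '' Y ⊆ Y) : ∃ r, Y = closedBall 0 r := by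
  obtain ⟨y, hy, hmax⟩ := hc.exists_isMaxOn hne continuous_norm.continuousOn
  refine ⟨‖y‖, ?_⟩
  rcases subsingleton_or_nontrivial E with hE | hE
  · rw [hne.eq_univ, (nonempty_closedBall.2 (norm_nonneg y)).eq_univ]
  refine Subset.antisymm (fun z hz => mem_closedBall_zero_iff.2 (hmax hz)) ?_
  rw [← convexHull_sphere_eq_closedBall 0 (norm_nonneg y)]
  exact convexHull_min (sphere_subset_of_forall_image_subset hY hy) hconv

theorem closedBall_union_closedBall {α : Type*} [PseudoMetricSpace α] (x : α) (a b : ℝ) :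
    closedBall x a ∪ closedBall x b = closedBall x (max a b) := by
  ext
  simp

theorem exists_injective_affineMap_leftInvOn {V W : Type*} [NormedAddCommGroup V]
    [NormedSpace ℝ V] [FiniteDimensional ℝ V] [NormedAddCommGroup W] [NormedSpace ℝ W]
    [FiniteDimensional ℝ W] (f : V →ₗ[ℝ] ℝ)
    (hf : Module.finrank ℝ (LinearMap.ker f) = Module.finrank ℝ W) {𝕊 : Set V}
    (h𝕊 : 𝕊 ⊆ {x | f x = 1}) (M : V →ₗ[ℝ] W) {r : ℝ} (hr : 0 < r)
    (hM : closedBall 0 r ⊆ M '' 𝕊) :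
    ∃ F : W →ᵃ[ℝ] V, Function.Injective F ∧ LeftInvOn F M 𝕊 := by
  obtain ⟨x₀, hx₀, hMx₀⟩ := hM (mem_closedBall_self hr.le)
  have hker : ∀ x ∈ 𝕊, x - x₀ ∈ LinearMap.ker f := fun x hx => by
    simp [show f x = 1 from h𝕊 hx, show f x₀ = 1 from h𝕊 hx₀]
  set L := M ∘ₗ (LinearMap.ker f).subtype
  have hL : ∀ x (hx : x ∈ 𝕊), L ⟨x - x₀, hker x hx⟩ = M x := fun x _ => by
    simp [L, hMx₀]
  have hLsurj : Function.Surjective L := by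
    refine (closedBall_subset_range_iff_surjective 0 hr).1 fun z hz => ?_
    obtain ⟨x, hx, rfl⟩ := hM hz
    exact ⟨_, hL x hx⟩
  let e := LinearEquiv.ofBijective L
    ⟨(LinearMap.injective_iff_surjective_of_finrank_eq_finrank hf).2 hLsurj, hLsurj⟩
  refine ⟨((LinearMap.ker f).subtype ∘ₗ e.symm.toLinearMap).toAffineMap +
    AffineMap.const ℝ W x₀, fun w₁ w₂ h => e.symm.injective (Subtype.ext ?_), fun x hx => ?_⟩
  · simpa using h
  · have : e.symm (M x) = ⟨x - x₀, hker x hx⟩ := e.symm_apply_eq.2 (hL x hx).symm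
    simp [this]

theorem stmt_2_general {ℓ : ℕ} (𝕊 : Set (Euc ℓ)) (hS : IsStateSpace 𝕊)
    (h : ∀ (n : ℕ) (X : Set (Euc n)), X.Nonempty → IsCompact X →
      Module.finrank ℝ (affineSpan ℝ X).direction ≤ ℓ - 1 →
      (ddi X 𝕊).Nonempty ∧
        ∀ Y ∈ ddi X 𝕊, ∀ U : Euc n ≃ₗᵢ[ℝ] Euc n, U '' X = X → U '' Y = Y) :
    IsHyperEllipsoid 𝕊 := by
  obtain ⟨h𝕊c, h𝕊conv, f, hf0, hf⟩ := hS
  have h𝕊f : 𝕊 ⊆ {x | f x = 1} := hf ▸ subset_affineSpan ℝ 𝕊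
  obtain ⟨⟨Y, hY⟩, hsym⟩ := h (ℓ - 1) (closedBall 0 1) (nonempty_closedBall.2 zero_le_one)
    (isCompact_closedBall 0 1) ((Submodule.finrank_le _).trans_eq finrank_euclideanSpace_fin)
  obtain ⟨⟨M, rfl⟩, hBY, -⟩ := hY.1
  obtain ⟨r₀, hr₀⟩ := exists_eq_closedBall_of_forall_image_subset
    (h𝕊c.image M.continuous_of_finiteDimensional) (h𝕊conv.linear_image M)
    ((nonempty_closedBall.2 zero_le_one).mono hBY)
    fun U => (hsym _ hY U (by simp [U.image_closedBall])).le
  set r := max 1 r₀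
  have hr : 0 < r := lt_max_of_lt_left one_pos
  have hMr : M '' 𝕊 = closedBall 0 r := by
    rw [← closedBall_union_closedBall, ← hr₀, union_eq_right.2 hBY]
  have hball : (r⁻¹ • M) '' 𝕊 = closedBall 0 1 := calc
    ⇑(r⁻¹ • M) '' 𝕊 = r⁻¹ • (M '' 𝕊) := by rw [← image_smul, image_image]; rfl
    _ = closedBall 0 1 := by
      rw [hMr, ← smul_unitClosedBall_of_nonneg hr.le, inv_smul_smul₀ hr.ne']
  have hdim : Module.finrank ℝ (LinearMap.ker f) = Module.finrank ℝ (Euc (ℓ - 1)) := by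
    have := Module.Dual.finrank_ker_add_one_of_ne_zero hf0
    simp only [finrank_euclideanSpace_fin] at this ⊢
    omega
  obtain ⟨F, hFinj, hF⟩ := exists_injective_affineMap_leftInvOn f hdim h𝕊f (r⁻¹ • M) one_pos
    hball.ge
  exact ⟨F, hFinj, by rw [← hball, hF.image_image]⟩

theorem stmt_2 {ℓ : ℕ} (hℓ : 2 ≤ ℓ) (𝕊 : Set (Euc ℓ)) (hS : IsStateSpace 𝕊)
    (h : ∀ (n : ℕ) (X : Set (Euc n)), X.Nonempty → IsCompact X →
      Module.finrank ℝ (affineSpan ℝ X).direction ≤ ℓ - 1 →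
      (ddi X 𝕊).Nonempty ∧
        ∀ Y ∈ ddi X 𝕊, ∀ U : Euc n ≃ₗᵢ[ℝ] Euc n, U '' X = X → U '' Y = Y) :
    IsHyperEllipsoid 𝕊 :=
  stmt_2_general 𝕊 hS h
end
end

section
/- Let 𝔸 ⊆ ℝ^ℓ be a set whose linear span is all of ℝ^ℓ, and let D, D′ : ℝ^ℓ → ℝⁿ be linear maps with D injective. Then D′(𝔸) = D(𝔸) if and only if there exists a linear map U : ℝ^ℓ → ℝ^ℓ such that U(𝔸) = 𝔸 and D′ = D ∘ U. (In particular, the range D(𝔸) of an injective, i.e. informationally complete, map D identifies D up to gauge symmetries of 𝔸.) -/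
open MeasureTheory Metric Set

noncomputable section

theorem stmt_4 {ℓ n : ℕ} (𝔸 : Set (Euc ℓ)) (hspan : Submodule.span ℝ 𝔸 = ⊤)
    (D D' : Euc ℓ →ₗ[ℝ] Euc n) (hD : Function.Injective D) :
    D' '' 𝔸 = D '' 𝔸 ↔
      ∃ U : Euc ℓ →ₗ[ℝ] Euc ℓ, U '' 𝔸 = 𝔸 ∧ D' = D ∘ₗ U := by
  constructor
  · intro h
    -- range D' ≤ range D
    have hrange : LinearMap.range D' ≤ LinearMap.range D := by
      have h1 : LinearMap.range D' = Submodule.span ℝ (D' '' 𝔸) := by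
        rw [← Submodule.map_span, hspan, LinearMap.range_eq_map]
      have h2 : LinearMap.range D = Submodule.span ℝ (D '' 𝔸) := by
        rw [← Submodule.map_span, hspan, LinearMap.range_eq_map]
      rw [h1, h2, h]
    obtain ⟨g, hg⟩ := LinearMap.exists_leftInverse_of_injective D
      (LinearMap.ker_eq_bot.mpr hD)
    refine ⟨g ∘ₗ D', ?_, ?_⟩
    · have hDU : D ∘ₗ (g ∘ₗ D') = D' := by
        ext x
        obtain ⟨y, hy⟩ := hrange ⟨x, rfl⟩
        simp only [LinearMap.comp_apply, ← hy]
        have := LinearMap.congr_fun hg y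
        simp only [LinearMap.comp_apply, LinearMap.id_apply] at this
        rw [this]
      have : D '' ((g ∘ₗ D') '' 𝔸) = D '' 𝔸 := by
        rw [← Set.image_comp]
        have : (⇑D ∘ ⇑(g ∘ₗ D')) = ⇑D' := by
          rw [← LinearMap.coe_comp, hDU]
        rw [this, h]
      exact (Set.image_injective.mpr hD) this
    · ext x
      obtain ⟨y, hy⟩ := hrange ⟨x, rfl⟩
      simp only [LinearMap.comp_apply, ← hy]
      have := LinearMap.congr_fun hg y
      simp only [LinearMap.comp_apply, LinearMap.id_apply] at this
      rw [this]
  · rintro ⟨U, hU, rfl⟩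
    rw [LinearMap.coe_comp, Set.image_comp, hU]
end
end

section
/- Let 𝔸 ⊆ ℝ^ℓ be a set whose linear span is all of ℝ^ℓ, let D, D′ : ℝ^ℓ → ℝⁿ be linear maps, and let P : ℝ^ℓ → ℝ^ℓ be the orthogonal projection onto the orthogonal complement of the kernel of D. Then D′(𝔸) = D(𝔸) if and only if there exists a linear map U : ℝ^ℓ → ℝ^ℓ such that D′ = D ∘ U and P(U(𝔸)) = P(𝔸). -/
open MeasureTheory Metric Set

noncomputable section

/-!
The projection `P` onto `(ker D)ᗮ` and `D` itself have the same fibres, the cosets of `ker D`;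
hence `P '' S = P '' T ↔ D '' S = D '' T` for all sets `S, T`, and the condition
`P '' (U '' 𝔸) = P '' 𝔸` just says `D '' (U '' 𝔸) = D '' 𝔸`. Conversely, since `𝔸` spans,
`D' '' 𝔸 = D '' 𝔸` forces `range D' = range D`, so `D'` lifts through `D`.
-/

open Submodule LinearMap

theorem Set.image_subset_image_of_eq_imp {α β γ : Type*} {f : α → β} {g : α → γ}
    (hfg : ∀ x y, f x = f y → g x = g y) {s t : Set α} (hst : f '' s ⊆ f '' t) :
    g '' s ⊆ g '' t := by
  rintro _ ⟨x, hx, rfl⟩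
  obtain ⟨y, hy, hyx⟩ := hst (mem_image_of_mem f hx)
  exact ⟨y, hy, hfg y x hyx⟩

theorem Set.image_eq_image_iff_of_eq_iff {α β γ : Type*} {f : α → β} {g : α → γ}
    (hfg : ∀ x y, f x = f y ↔ g x = g y) {s t : Set α} :
    f '' s = f '' t ↔ g '' s = g '' t := by
  have hf (x y) := (hfg x y).1
  have hg (x y) := (hfg x y).2
  exact ⟨fun h ↦ (image_subset_image_of_eq_imp hf h.le).antisymm
      (image_subset_image_of_eq_imp hf h.ge),
    fun h ↦ (image_subset_image_of_eq_imp hg h.le).antisymm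
      (image_subset_image_of_eq_imp hg h.ge)⟩

theorem LinearMap.range_eq_range_of_image_eq {R M N : Type*} [Semiring R] [AddCommMonoid M]
    [Module R M] [AddCommMonoid N] [Module R N] {s : Set M} (hs : span R s = ⊤)
    {f g : M →ₗ[R] N} (h : f '' s = g '' s) : range f = range g := by
  rw [range_eq_map, range_eq_map, ← hs, map_span, map_span, h]

theorem LinearMap.exists_comp_eq_of_range_le {R M N P : Type*} [Ring R] [AddCommGroup M]
    [Module R M] [AddCommGroup N] [Module R N] [AddCommGroup P] [Module R P]
    [Module.Projective R P] (f : M →ₗ[R] N) (g : P →ₗ[R] N) (h : range g ≤ range f) :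
    ∃ u : P →ₗ[R] M, f ∘ₗ u = g := by
  obtain ⟨u, hu⟩ := Module.projective_lifting_property f.rangeRestrict
    (g.codRestrict (range f) fun x ↦ h (mem_range_self g x)) f.surjective_rangeRestrict
  exact ⟨u, ext fun x ↦ Subtype.ext_iff.mp (LinearMap.congr_fun hu x)⟩

theorem LinearMap.orthogonalProjectionOnto_orthogonal_ker_eq_iff {𝕜 E F : Type*} [RCLike 𝕜]
    [NormedAddCommGroup E] [InnerProductSpace 𝕜 E] [AddCommGroup F] [Module 𝕜 F]
    (D : E →ₗ[𝕜] F) [(ker D).HasOrthogonalProjection] {x y : E} :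
    (ker D)ᗮ.orthogonalProjectionOnto x = (ker D)ᗮ.orthogonalProjectionOnto y ↔ D x = D y := by
  rw [← sub_eq_zero, ← map_sub, orthogonalProjectionOnto_eq_zero_iff, orthogonal_orthogonal,
    mem_ker, map_sub, sub_eq_zero]

theorem stmt_5 {ℓ n : ℕ} (𝔸 : Set (Euc ℓ)) (hspan : Submodule.span ℝ 𝔸 = ⊤)
    (D D' : Euc ℓ →ₗ[ℝ] Euc n) (P : Euc ℓ →ₗ[ℝ] Euc ℓ)
    (hP : ∀ x : Euc ℓ, P x = (Submodule.orthogonalProjectionOnto (LinearMap.ker D)ᗮ x : Euc ℓ)) :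
    D' '' 𝔸 = D '' 𝔸 ↔
      ∃ U : Euc ℓ →ₗ[ℝ] Euc ℓ, D' = D ∘ₗ U ∧ P '' (U '' 𝔸) = P '' 𝔸 := by
  have hPD (x y : Euc ℓ) : P x = P y ↔ D x = D y := by
    rw [hP, hP, Subtype.coe_inj, D.orthogonalProjectionOnto_orthogonal_ker_eq_iff]
  constructor
  · intro h
    obtain ⟨U, rfl⟩ := D.exists_comp_eq_of_range_le D' (range_eq_range_of_image_eq hspan h).le
    exact ⟨U, rfl, (image_eq_image_iff_of_eq_iff hPD).2 (by rwa [image_image])⟩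
  · rintro ⟨U, rfl, hU⟩
    rw [coe_comp, image_comp]
    exact (image_eq_image_iff_of_eq_iff hPD).1 hU
end
end

section
/- Let 𝕊 ⊆ ℝ^ℓ (ℓ ≥ 2) be a state space and let S ⊆ 𝕊 be nonempty. Then S is observationally complete for every injective (informationally complete) linear map M : ℝ^ℓ → ℝⁿ, for every n, if and only if ddi(S | 𝕊) = {𝕊}. -/
open MeasureTheory Metric Set

noncomputable section

/-- `S` is observationally complete for the measurement `M` (w.r.t. state space `𝕊`). -/
def ObsComplete {ℓ n : ℕ} (𝕊 S : Set (Euc ℓ)) (M : Euc ℓ →ₗ[ℝ] Euc n) : Prop :=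
  ddi (M '' S) 𝕊 = {M '' 𝕊}

/-! An injective linear map `M` carries the inference problem for `S` onto the one for `M(S)`.
Admissible sets for `M(S)` are exactly the images of admissible sets for `S` (a left inverse
of `M` pulls them back), and on the `d`-dimensional affine span of `S` the map `M` multiplies
`d`-dimensional Hausdorff measure by a single constant in `(0, ∞)`, because Hausdorff measure
on the `d`-dimensional range of `M`, pulled back along `M`, is a Haar measure. Hence
`ddi(M(S) | 𝕊) = M(ddi(S | 𝕊))`; the converse is the case `M = id`. -/

open Module
open scoped NNReal ENNReal

theorem finrank_direction_affineSpan_image {E F : Type*} [AddCommGroup E] [Module ℝ E]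
    [AddCommGroup F] [Module ℝ F] {M : E →ₗ[ℝ] F} (hM : Function.Injective M)
    (s : Set E) :
    finrank ℝ (affineSpan ℝ (M '' s)).direction = finrank ℝ (affineSpan ℝ s).direction := by
  rw [← M.coe_toAffineMap, ← AffineSubspace.map_span, AffineSubspace.map_direction]
  exact (Submodule.equivMapOfInjective M hM _).finrank_eq.symm

section
variable {E F : Type*} [NormedAddCommGroup E] [NormedSpace ℝ E] [FiniteDimensional ℝ E]
  [MeasurableSpace E] [BorelSpace E] [NormedAddCommGroup F] [NormedSpace ℝ F]
  [MeasurableSpace F] [BorelSpace F]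

theorem exists_hausdorffMeasure_image_linearMap_eq_smul {T : E →ₗ[ℝ] F}
    (hT : Function.Injective T) :
    ∃ c : ℝ≥0, c ≠ 0 ∧ ∀ B : Set E, μH[finrank ℝ E] (T '' B) = c • μH[finrank ℝ E] B := by
  set W := LinearMap.range T
  let e : E ≃L[ℝ] W := (LinearEquiv.ofInjective T hT).toContinuousLinearEquiv
  have : (μH[finrank ℝ E] : Measure W).IsAddHaarMeasure := by
    rw [e.toLinearEquiv.finrank_eq]
    infer_instance
  set ν : Measure E := (μH[finrank ℝ E] : Measure W).map e.symm
  refine ⟨Measure.addHaarScalarFactor ν μH[finrank ℝ E],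
    (Measure.addHaarScalarFactor_pos_of_isAddHaarMeasure _ _).ne', fun B => ?_⟩
  have hTB : T '' B = ((↑) : W → F) '' (e '' B) := by
    rw [image_image]; rfl
  rw [← Measure.smul_apply, ← Measure.isAddLeftInvariant_eq_smul, hTB,
    (isometry_subtype_coe).hausdorffMeasure_image (Or.inl (Nat.cast_nonneg _)),
    e.image_eq_preimage_symm]
  exact (e.symm.toHomeomorph.toMeasurableEquiv.map_apply B).symm

theorem exists_hausdorffMeasure_image_linearMap_eq_smul_on_affineSubspace {T : E →ₗ[ℝ] F}
    (hT : Function.Injective T) (P : AffineSubspace ℝ E) :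
    ∃ c : ℝ≥0, c ≠ 0 ∧ ∀ A ⊆ (P : Set E),
      μH[finrank ℝ P.direction] (T '' A) = c • μH[finrank ℝ P.direction] A := by
  rcases (P : Set E).eq_empty_or_nonempty with hP | ⟨p, hp⟩
  · refine ⟨1, one_ne_zero, fun A hA => ?_⟩
    obtain rfl : A = ∅ := subset_empty_iff.mp (hP ▸ hA)
    simp
  obtain ⟨c, hc, hcT⟩ := exists_hausdorffMeasure_image_linearMap_eq_smul
    (T := T ∘ₗ P.direction.subtype) (hT.comp Subtype.val_injective)
  refine ⟨c, hc, fun A hA => ?_⟩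
  let φ : P.direction → E := fun v => p + v
  have hφ : Isometry φ := (IsometryEquiv.addLeft p).isometry.comp isometry_subtype_coe
  have hA : A = φ '' (φ ⁻¹' A) := by
    refine (image_preimage_eq_of_subset fun a ha => ?_).symm
    refine ⟨⟨a - p, AffineSubspace.vsub_mem_direction (hA ha) hp⟩, ?_⟩
    simp [φ]
  have hTA : T '' A =
      IsometryEquiv.addLeft (T p) '' ((T ∘ₗ P.direction.subtype) '' (φ ⁻¹' A)) := by
    conv_lhs => rw [hA]
    simp [φ, image_image]
  rw [hTA, IsometryEquiv.hausdorffMeasure_image, hcT]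
  conv_rhs => rw [hA, hφ.hausdorffMeasure_image (Or.inl (Nat.cast_nonneg _))]

end

theorem admissible_image_iff {ℓ m n : ℕ} {𝕊 : Set (Euc ℓ)} {S : Set (Euc m)}
    {M : Euc m →ₗ[ℝ] Euc n} (hM : Function.Injective M) {R' : Set (Euc n)} :
    Admissible 𝕊 (M '' S) R' ↔ ∃ R, Admissible 𝕊 S R ∧ M '' R = R' := by
  have hspan : (affineSpan ℝ (M '' S) : Set (Euc n)) = M '' affineSpan ℝ S := by
    rw [← M.coe_toAffineMap, ← AffineSubspace.map_span, AffineSubspace.coe_map]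
  constructor
  · rintro ⟨⟨N, rfl⟩, hSR, hRspan⟩
    rw [hspan] at hRspan
    obtain ⟨g, hg⟩ := M.exists_leftInverse_of_injective (LinearMap.ker_eq_bot.mpr hM)
    have hgM : ∀ x, g (M x) = x := LinearMap.congr_fun hg
    refine ⟨g '' (N '' 𝕊), ⟨⟨g ∘ₗ N, by rw [LinearMap.coe_comp, image_comp]⟩, ?_, ?_⟩, ?_⟩
    · exact fun s hs => ⟨M s, hSR (mem_image_of_mem M hs), hgM s⟩
    · rintro _ ⟨y, hy, rfl⟩
      obtain ⟨a, ha, rfl⟩ := hRspan hy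
      rwa [hgM]
    · rw [image_image]
      refine (image_congr fun y hy => ?_).trans (image_id _)
      obtain ⟨a, -, rfl⟩ := hRspan hy
      rw [hgM, id]
  · rintro ⟨R, ⟨⟨N, rfl⟩, hSR, hRspan⟩, rfl⟩
    refine ⟨⟨M ∘ₗ N, by rw [LinearMap.coe_comp, image_comp]⟩, image_mono hSR, ?_⟩
    rw [hspan]
    exact image_mono hRspan

theorem ddi_image_of_injective {ℓ m n : ℕ} {𝕊 : Set (Euc ℓ)} (S : Set (Euc m))
    {M : Euc m →ₗ[ℝ] Euc n} (hM : Function.Injective M) :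
    ddi (M '' S) 𝕊 = (M '' ·) '' ddi S 𝕊 := by
  obtain ⟨c, hc, hcM⟩ := exists_hausdorffMeasure_image_linearMap_eq_smul_on_affineSubspace hM
    (affineSpan ℝ S)
  have hle : ∀ {R₁ R₂}, Admissible 𝕊 S R₁ → Admissible 𝕊 S R₂ →
      (μH[finrank ℝ (affineSpan ℝ (M '' S)).direction] (M '' R₁) ≤
        μH[finrank ℝ (affineSpan ℝ (M '' S)).direction] (M '' R₂) ↔
      μH[finrank ℝ (affineSpan ℝ S).direction] R₁ ≤
        μH[finrank ℝ (affineSpan ℝ S).direction] R₂) := by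
    intro R₁ R₂ h₁ h₂
    rw [finrank_direction_affineSpan_image hM, hcM R₁ h₁.2.2, hcM R₂ h₂.2.2,
      ENNReal.smul_def, ENNReal.smul_def, smul_eq_mul, smul_eq_mul,
      ENNReal.mul_le_mul_iff_right (by simpa using hc) ENNReal.coe_ne_top]
  ext R'
  constructor
  · rintro ⟨hR', hmin⟩
    obtain ⟨R, hR, rfl⟩ := (admissible_image_iff hM).1 hR'
    exact ⟨R, ⟨hR, fun R₂ h₂ =>
      (hle hR h₂).1 (hmin _ ((admissible_image_iff hM).2 ⟨R₂, h₂, rfl⟩))⟩, rfl⟩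
  · rintro ⟨R, ⟨hR, hmin⟩, rfl⟩
    refine ⟨(admissible_image_iff hM).2 ⟨R, hR, rfl⟩, fun R₂' h₂' => ?_⟩
    obtain ⟨R₂, h₂, rfl⟩ := (admissible_image_iff hM).1 h₂'
    exact (hle hR h₂).2 (hmin R₂ h₂)

theorem stmt_6_general {ℓ : ℕ} (𝕊 : Set (Euc ℓ)) (S : Set (Euc ℓ)) :
    (∀ (n : ℕ) (M : Euc ℓ →ₗ[ℝ] Euc n), Function.Injective M → ObsComplete 𝕊 S M) ↔
      ddi S 𝕊 = {𝕊} := by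
  constructor
  · intro h
    simpa [ObsComplete] using h ℓ LinearMap.id Function.injective_id
  · intro h n M hM
    rw [ObsComplete, ddi_image_of_injective S hM, h, image_singleton]

theorem stmt_6 {ℓ : ℕ} (hℓ : 2 ≤ ℓ) (𝕊 : Set (Euc ℓ)) (hS : IsStateSpace 𝕊)
    (S : Set (Euc ℓ)) (hsub : S ⊆ 𝕊) (hne : S.Nonempty) :
    (∀ (n : ℕ) (M : Euc ℓ →ₗ[ℝ] Euc n), Function.Injective M → ObsComplete 𝕊 S M) ↔
      ddi S 𝕊 = {𝕊} :=
  stmt_6_general 𝕊 S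
end
end

section
/- Let D : ℝ^ℓ → ℝⁿ be a linear map, let V = (ker D)^⊥ be the orthogonal complement of its kernel, and let k = dim V. Then there exists a constant λ > 0, depending only on D, such that for every set X ⊆ V the k-dimensional Hausdorff measure of the image satisfies μ_H^k(D(X)) = λ · μ_H^k(X). -/
open MeasureTheory Metric Set

noncomputable section

theorem stmt_13 {ℓ n : ℕ} (D : Euc ℓ →ₗ[ℝ] Euc n) (k : ℕ)
    (hk : k = Module.finrank ℝ ↥(LinearMap.ker D)ᗮ) :
    ∃ c : ℝ, 0 < c ∧ ∀ X : Set (Euc ℓ), X ⊆ ((LinearMap.ker D)ᗮ : Set (Euc ℓ)) →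
      μH[(k : ℝ)] (D '' X) = ENNReal.ofReal c * μH[(k : ℝ)] X := by
  classical
  set V : Submodule ℝ (Euc ℓ) := (LinearMap.ker D)ᗮ with hV
  set W : Submodule ℝ (Euc n) := LinearMap.range D with hWdef
  have hW : Module.finrank ℝ W = k := by
    have h1 := LinearMap.finrank_range_add_finrank_ker D
    have h2 := (LinearMap.ker D).finrank_add_finrank_orthogonal
    rw [← hV] at h2
    rw [← hWdef] at h1
    simp only [finrank_euclideanSpace_fin] at h1 h2
    omega
  -- isometries with model spaces
  let e : V ≃ₗᵢ[ℝ] Euc k :=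
    (stdOrthonormalBasis ℝ V).repr.trans
      (LinearIsometryEquiv.piLpCongrLeft 2 ℝ ℝ (finCongr hk.symm))
  let f : W ≃ₗᵢ[ℝ] Euc k :=
    (stdOrthonormalBasis ℝ W).repr.trans
      (LinearIsometryEquiv.piLpCongrLeft 2 ℝ ℝ (finCongr hW))
  -- the restriction of D to V, corestricted to W
  let Dv : V →ₗ[ℝ] W :=
    (D.comp V.subtype).codRestrict W (fun x => ⟨(x : Euc ℓ), rfl⟩)
  have hDv : ∀ x : V, (Dv x : Euc n) = D (x : Euc ℓ) := fun x => rfl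
  have hDvinj : Function.Injective Dv := by
    intro x y hxy
    have h : D ((x : Euc ℓ) - y) = 0 := by
      have h' := congrArg (Subtype.val : W → Euc n) hxy
      simp only [hDv] at h'
      simp [map_sub, h']
    have hmem : ((x : Euc ℓ) - y) ∈ LinearMap.ker D ⊓ V :=
      ⟨h, V.sub_mem x.2 y.2⟩
    have hz : ((x : Euc ℓ) - y) = 0 := by
      have hbot : LinearMap.ker D ⊓ V = ⊥ :=
        (Submodule.orthogonal_disjoint (LinearMap.ker D)).eq_bot
      simpa [hbot] using hmem
    exact Subtype.ext (sub_eq_zero.mp hz)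
  -- the model endomorphism
  let A : Euc k →ₗ[ℝ] Euc k :=
    f.toLinearEquiv.toLinearMap ∘ₗ Dv ∘ₗ e.symm.toLinearEquiv.toLinearMap
  have hAinj : Function.Injective A := by
    simp only [A, LinearMap.coe_comp]
    exact f.injective.comp (hDvinj.comp e.symm.injective)
  have hdet : LinearMap.det A ≠ 0 := by
    intro h
    have := LinearMap.bot_lt_ker_of_det_eq_zero h
    rw [LinearMap.ker_eq_bot.mpr hAinj] at this
    exact lt_irrefl _ this
  have hd0 : (0:ℝ) ≤ (k:ℝ) := by positivity
  -- the Hausdorff measure on the model space is Haar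
  haveI hHaar : (μH[(k:ℝ)] : Measure (Euc k)).IsAddHaarMeasure := by
    have : (k : ℝ) = ((Module.finrank ℝ (Euc k) : ℕ) : ℝ) := by
      simp [finrank_euclideanSpace_fin]
    rw [this]
    infer_instance
  refine ⟨|LinearMap.det A|, abs_pos.mpr hdet, fun X hX => ?_⟩
  set S : Set V := (Subtype.val : V → Euc ℓ) ⁻¹' X with hS
  have hXS : (Subtype.val : V → Euc ℓ) '' S = X := by
    rw [hS, Set.image_preimage_eq_inter_range, Subtype.range_coe]
    exact inter_eq_left.mpr hX
  set Y : Set (Euc k) := e '' S with hY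
  have hμX : μH[(k:ℝ)] X = μH[(k:ℝ)] Y := by
    rw [← hXS, isometry_subtype_coe.hausdorffMeasure_image (Or.inl hd0),
      ← e.isometry.hausdorffMeasure_image (Or.inr e.surjective) S]
  have himg : (Subtype.val : W → Euc n) '' (f.symm '' (A '' Y)) = D '' X := by
    have h1 : A '' Y = f '' (Dv '' S) := by
      simp only [A, Y, image_image]
      ext x
      simp [LinearIsometryEquiv.coe_toLinearEquiv]
    have h2 : (⇑f.symm '' (⇑f '' (⇑Dv '' S))) = ⇑Dv '' S := by
      rw [← image_comp]
      simp [Function.comp_def]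
    rw [h1, h2, ← hXS, image_image, image_image]
    exact image_congr fun x _ => (hDv x)
  have hμDX : μH[(k:ℝ)] (D '' X) = μH[(k:ℝ)] (A '' Y) := by
    rw [← himg, isometry_subtype_coe.hausdorffMeasure_image (Or.inl hd0),
      f.symm.isometry.hausdorffMeasure_image (Or.inr f.symm.surjective)]
  rw [hμDX, hμX, Measure.addHaar_image_linearMap]
end
end

section
/- Let n ≥ 3 and let S = {(cos(2πk/n), sin(2πk/n)) : k = 0, 1, …, n−1} ⊆ ℝ² be the vertex set of a regular n-gon inscribed in the unit circle. Then every ellipse E ⊆ ℝ² containing S has Lebesgue measure (area) at least π, with equality if and only if E is the closed unit disk; i.e., the closed unit disk is the unique minimum-volume enclosing ellipse of S. -/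
/-!
Write `E = F '' closedBall 0 1` and `F⁻¹ = L + c` with `L` linear. The vertices `p_k` lie in `E`,
so `‖L p_k + c‖ ≤ 1`. Averaging the squares over the `n` vertices kills the terms in `cos θ_k`,
`sin θ_k`, `cos 2θ_k`, `sin 2θ_k` (this needs `n ≥ 3`) and leaves
`(‖L e₀‖² + ‖L e₁‖²) / 2 + ‖c‖² ≤ 1`. As `det L ^ 2 + ⟪L e₀, L e₁⟫ ^ 2 = ‖L e₀‖² ‖L e₁‖²`,
AM-GM gives `|det L| ≤ 1`, hence `vol E = π / |det L| ≥ π`. Equality forces `c = 0` and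
`(L e₀, L e₁)` orthonormal, so `F⁻¹` is an isometry fixing `0` and `E` is the unit disk.
-/

open MeasureTheory Metric Set

noncomputable section

/-- An ellipsoid in `ℝ^d`: the image of the closed unit ball under an invertible affine
transformation. -/
def IsEllipsoid {d : ℕ} (E : Set (Euc d)) : Prop :=
  ∃ F : Euc d ≃ᵃ[ℝ] Euc d, E = F '' closedBall 0 1

open Real

lemma sum_range_cos_sin_eq_zero {n m : ℕ} (hm : 0 < m) (hmn : m < n) :
    ∑ k ∈ Finset.range n, cos (m * (2 * π * k / n)) = 0 ∧
      ∑ k ∈ Finset.range n, sin (m * (2 * π * k / n)) = 0 := by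
  have hζ := Complex.isPrimitiveRoot_exp n (by omega)
  set z := Complex.exp (2 * π * Complex.I / n) ^ m
  have hz : z ≠ 1 := hζ.pow_ne_one_of_pos_of_lt hm.ne' hmn
  have hzn : z ^ n = 1 := by rw [pow_right_comm, hζ.pow_eq_one, one_pow]
  have hsum : ∑ k ∈ Finset.range n, z ^ k = 0 := by
    rw [geom_sum_eq hz, hzn, sub_self, zero_div]
  have hterm : ∀ k : ℕ, z ^ k = Complex.exp (↑(m * (2 * π * k / n)) * Complex.I) := by
    intro k
    rw [← pow_mul, ← Complex.exp_nat_mul]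
    push_cast
    ring_nf
  simp_rw [hterm] at hsum
  have hre := congrArg Complex.re hsum
  have him := congrArg Complex.im hsum
  simp only [Complex.re_sum, Complex.exp_ofReal_mul_I_re, Complex.zero_re] at hre
  simp only [Complex.im_sum, Complex.exp_ofReal_mul_I_im, Complex.zero_im] at him
  exact ⟨hre, him⟩

section InnerProductSpace

variable {V W : Type*} [NormedAddCommGroup V] [InnerProductSpace ℝ V]
  [NormedAddCommGroup W] [InnerProductSpace ℝ W]

lemma norm_cos_smul_add_sin_smul_add_sq (θ : ℝ) (u v c : V) :
    ‖cos θ • u + sin θ • v + c‖ ^ 2 = (‖u‖ ^ 2 + ‖v‖ ^ 2) / 2 + ‖c‖ ^ 2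
      + cos (2 * θ) * ((‖u‖ ^ 2 - ‖v‖ ^ 2) / 2) + sin (2 * θ) * inner ℝ u v
      + cos θ * (2 * inner ℝ u c) + sin θ * (2 * inner ℝ v c) := by
  rw [cos_two_mul, sin_two_mul]
  simp only [norm_add_sq_real, norm_smul, inner_add_left, inner_smul_left, inner_smul_right,
    Real.norm_eq_abs, mul_pow, sq_abs, conj_trivial]
  linear_combination (‖v‖ ^ 2) * sin_sq_add_cos_sq θ

def regularPolygonVertex (e₀ e₁ : V) (n k : ℕ) : V :=
  cos (2 * π * k / n) • e₀ + sin (2 * π * k / n) • e₁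

lemma sum_range_norm_cos_smul_add_sin_smul_add_sq {n : ℕ} (hn : 3 ≤ n) (u v c : V) :
    ∑ k ∈ Finset.range n, ‖cos (2 * π * k / n) • u + sin (2 * π * k / n) • v + c‖ ^ 2
      = n * ((‖u‖ ^ 2 + ‖v‖ ^ 2) / 2 + ‖c‖ ^ 2) := by
  obtain ⟨hcos₁, hsin₁⟩ := sum_range_cos_sin_eq_zero (n := n) one_pos (by omega)
  obtain ⟨hcos₂, hsin₂⟩ := sum_range_cos_sin_eq_zero (n := n) two_pos (by omega)
  simp only [Nat.cast_one, one_mul, Nat.cast_ofNat] at hcos₁ hsin₁ hcos₂ hsin₂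
  simp only [norm_cos_smul_add_sin_smul_add_sq, Finset.sum_add_distrib, ← Finset.sum_mul,
    hcos₁, hsin₁, hcos₂, hsin₂, Finset.sum_const, Finset.card_range, nsmul_eq_mul]
  ring

lemma AffineMap.map_regularPolygonVertex (G : V →ᵃ[ℝ] W) (e₀ e₁ : V) (n k : ℕ) :
    G (regularPolygonVertex e₀ e₁ n k)
      = cos (2 * π * k / n) • G.linear e₀ + sin (2 * π * k / n) • G.linear e₁ + G 0 := by
  rw [regularPolygonVertex, G.decomp]
  simp

lemma AffineMap.half_sum_norm_linear_sq_add_norm_sq_le_one {n : ℕ} (hn : 3 ≤ n)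
    (G : V →ᵃ[ℝ] W) (e₀ e₁ : V) (h : ∀ k < n, ‖G (regularPolygonVertex e₀ e₁ n k)‖ ≤ 1) :
    (‖G.linear e₀‖ ^ 2 + ‖G.linear e₁‖ ^ 2) / 2 + ‖G 0‖ ^ 2 ≤ 1 := by
  have hsum : (n : ℝ) * ((‖G.linear e₀‖ ^ 2 + ‖G.linear e₁‖ ^ 2) / 2 + ‖G 0‖ ^ 2) ≤ n * 1 := by
    rw [← sum_range_norm_cos_smul_add_sin_smul_add_sq hn, mul_one]
    calc _ ≤ ∑ _k ∈ Finset.range n, (1 : ℝ) := Finset.sum_le_sum fun k hk => by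
            rw [← G.map_regularPolygonVertex]
            exact pow_le_one₀ (norm_nonneg _) (h k (Finset.mem_range.mp hk))
      _ = n := by simp
  exact le_of_mul_le_mul_left hsum (by positivity)

end InnerProductSpace

section TwoDimensional

variable {V : Type*} [NormedAddCommGroup V] [InnerProductSpace ℝ V]
  (b : OrthonormalBasis (Fin 2) ℝ V)

lemma det_sq_add_inner_sq (L : V →ₗ[ℝ] V) :
    LinearMap.det L ^ 2 + inner ℝ (L (b 0)) (L (b 1)) ^ 2 = ‖L (b 0)‖ ^ 2 * ‖L (b 1)‖ ^ 2 := by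
  have : Fact (Module.finrank ℝ V = 2) := ⟨by simpa using Module.finrank_eq_card_basis b.toBasis⟩
  set o := b.toBasis.orientation
  have harea : o.areaForm (L (b 0)) (L (b 1)) = LinearMap.det L := by
    have hv : ![L (b 0), L (b 1)] = L ∘ b.toBasis := by
      ext i; fin_cases i <;> simp
    rw [o.areaForm_to_volumeForm, o.volumeForm_robust b rfl, hv, Module.Basis.det_comp,
      Module.Basis.det_self, mul_one]
  rw [← harea, add_comm]
  exact o.inner_sq_add_areaForm_sq _ _

lemma abs_det_le_half_sum_norm_sq (L : V →ₗ[ℝ] V) :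
    |LinearMap.det L| ≤ (‖L (b 0)‖ ^ 2 + ‖L (b 1)‖ ^ 2) / 2 := by
  refine abs_le_of_sq_le_sq ?_ (by positivity)
  nlinarith [det_sq_add_inner_sq b L, sq_nonneg (‖L (b 0)‖ ^ 2 - ‖L (b 1)‖ ^ 2),
    sq_nonneg (inner ℝ (L (b 0)) (L (b 1)))]

lemma orthonormal_comp_of_abs_det_eq_one (L : V →ₗ[ℝ] V)
    (h : (‖L (b 0)‖ ^ 2 + ‖L (b 1)‖ ^ 2) / 2 ≤ 1) (hdet : |LinearMap.det L| = 1) :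
    Orthonormal ℝ (L ∘ b) := by
  have hid := det_sq_add_inner_sq b L
  rw [← sq_abs, hdet] at hid
  obtain ⟨hinner, hnorm₀, hnorm₁⟩ : inner ℝ (L (b 0)) (L (b 1)) = 0 ∧ ‖L (b 0)‖ ^ 2 = 1 ∧
      ‖L (b 1)‖ ^ 2 = 1 := by
    refine ⟨?_, ?_, ?_⟩ <;> nlinarith [sq_nonneg (‖L (b 0)‖ ^ 2 - ‖L (b 1)‖ ^ 2),
      sq_nonneg (inner ℝ (L (b 0)) (L (b 1)))]
  rw [orthonormal_iff_ite]
  intro i j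
  fin_cases i <;> fin_cases j <;>
    simp [hnorm₀, hnorm₁, hinner, real_inner_comm (L (b 0))]

end TwoDimensional

section TwoDimensionalAffine

variable {V : Type*} [NormedAddCommGroup V] [InnerProductSpace ℝ V]
  (b : OrthonormalBasis (Fin 2) ℝ V) {G : V →ᵃ[ℝ] V}

lemma AffineMap.abs_det_linear_le_one
    (hG : (‖G.linear (b 0)‖ ^ 2 + ‖G.linear (b 1)‖ ^ 2) / 2 + ‖G 0‖ ^ 2 ≤ 1) :
    |LinearMap.det G.linear| ≤ 1 :=
  (abs_det_le_half_sum_norm_sq b G.linear).trans (by linarith [sq_nonneg ‖G 0‖])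

lemma AffineMap.norm_map_of_abs_det_linear_eq_one
    (hG : (‖G.linear (b 0)‖ ^ 2 + ‖G.linear (b 1)‖ ^ 2) / 2 + ‖G 0‖ ^ 2 ≤ 1)
    (hdet : |LinearMap.det G.linear| = 1) (x : V) : ‖G x‖ = ‖x‖ := by
  have hdet_le := abs_det_le_half_sum_norm_sq b G.linear
  have hG0 : G 0 = 0 := by
    rw [← norm_eq_zero, ← sq_eq_zero_iff]
    nlinarith [sq_nonneg ‖G 0‖]
  have hon : Orthonormal ℝ (G.linear ∘ b.toBasis) := by
    rw [OrthonormalBasis.coe_toBasis]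
    exact orthonormal_comp_of_abs_det_eq_one b G.linear (by linarith [sq_nonneg ‖G 0‖]) hdet
  have hb : Orthonormal ℝ b.toBasis := by
    rw [OrthonormalBasis.coe_toBasis]; exact b.orthonormal
  rw [G.decomp, Pi.add_apply, hG0, add_zero]
  exact (G.linear.isometryOfOrthonormal hb hon).norm_map x

end TwoDimensionalAffine

lemma MeasureTheory.Measure.addHaar_image_affineMap {E : Type*} [NormedAddCommGroup E]
    [NormedSpace ℝ E] [MeasurableSpace E] [BorelSpace E] [FiniteDimensional ℝ E]
    (μ : Measure E) [μ.IsAddHaarMeasure] (f : E →ᵃ[ℝ] E) (s : Set E) :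
    μ (f '' s) = ENNReal.ofReal |LinearMap.det f.linear| * μ s := by
  have hf : ⇑f = (· + f 0) ∘ f.linear := by
    funext x; exact congrFun f.decomp x
  rw [hf, Set.image_comp, Set.image_add_right, measure_preimage_add_right,
    Measure.addHaar_image_linearMap]

lemma AffineEquiv.image_closedBall_zero_of_norm_symm {V : Type*} [SeminormedAddCommGroup V]
    [NormedSpace ℝ V] (F : V ≃ᵃ[ℝ] V) (h : ∀ x, ‖F.symm x‖ = ‖x‖) (r : ℝ) :
    F '' closedBall 0 r = closedBall 0 r := by
  ext x
  rw [← F.preimage_symm, Set.mem_preimage, mem_closedBall_zero_iff, mem_closedBall_zero_iff, h]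

theorem stmt_14 (n : ℕ) (hn : 3 ≤ n) (S : Set (Euc 2))
    (hS : S = {p : Euc 2 | ∃ k : Fin n,
      p 0 = Real.cos (2 * Real.pi * (k : ℕ) / n) ∧
      p 1 = Real.sin (2 * Real.pi * (k : ℕ) / n)}) :
    ∀ E : Set (Euc 2), IsEllipsoid E → S ⊆ E →
      ENNReal.ofReal Real.pi ≤ volume E ∧
      (volume E = ENNReal.ofReal Real.pi ↔ E = closedBall (0 : Euc 2) 1) := by
  rintro E ⟨F, rfl⟩ hSE
  set b := EuclideanSpace.basisFun (Fin 2) ℝ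
  set G := F.symm.toAffineMap
  have hvertex : ∀ k < n, ‖G (regularPolygonVertex (b 0) (b 1) n k)‖ ≤ 1 := by
    intro k hk
    have hmem : regularPolygonVertex (b 0) (b 1) n k ∈ S := by
      rw [hS]
      exact ⟨⟨k, hk⟩, by simp [regularPolygonVertex, b]⟩
    obtain ⟨y, hy, hFy⟩ := hSE hmem
    rw [← hFy]
    simpa [G] using hy
  have hG := G.half_sum_norm_linear_sq_add_norm_sq_le_one hn (b 0) (b 1) hvertex
  have hdet_pos : 0 < |LinearMap.det G.linear| :=
    abs_pos.mpr (LinearEquiv.isUnit_det' F.symm.linear).ne_zero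
  have hvol : volume (F '' closedBall 0 1)
      = ENNReal.ofReal (|LinearMap.det G.linear|⁻¹ * π) := by
    rw [← F.coe_toAffineMap, Measure.addHaar_image_affineMap,
      EuclideanSpace.volume_closedBall_fin_two, ENNReal.ofReal_one, one_pow, one_mul,
      ← ENNReal.ofReal_mul (abs_nonneg _)]
    simp [G, AffineEquiv.linear_symm, LinearEquiv.det_coe_symm, abs_inv]
  have hdet_le := G.abs_det_linear_le_one b hG
  refine ⟨?_, fun hvol_eq => ?_, fun hE => by simp [hE]⟩
  · rw [hvol, ENNReal.ofReal_le_ofReal_iff (by positivity)]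
    exact le_mul_of_one_le_left pi_pos.le (one_le_inv_iff₀.mpr ⟨hdet_pos, hdet_le⟩)
  · rw [hvol, ENNReal.ofReal_eq_ofReal_iff (by positivity) pi_pos.le, mul_eq_right₀ pi_pos.ne',
      inv_eq_one] at hvol_eq
    exact F.image_closedBall_zero_of_norm_symm (G.norm_map_of_abs_det_linear_eq_one b hG hvol_eq) 1
end
end

section
/- Let n ≥ 3 and let R : ℝ² → ℝ² be the rotation about the origin by angle 2π/n. If E ⊆ ℝ² is an ellipse satisfying R(E) = E, then E is a closed disk centered at the origin. -/
open MeasureTheory Metric Set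

noncomputable section

/-!
An ellipsoid `F '' closedBall 0 1` is centrally symmetric about `F 0`, and a nonempty bounded
set has only one centre of symmetry; since the linear map `R` maps the ellipsoid onto itself
and maps centres of symmetry to centres of symmetry, it fixes `F 0`. A rotation whose angle has
nonzero sine fixes only the origin, so the ellipsoid is `{x | ‖T x‖ ≤ 1}` for the linear map
`T = F.linear⁻¹`, and `‖T (R x)‖ = ‖T x‖` by homogeneity. A Euclidean norm on `ℝ²` invariant
under such a rotation is a multiple of the standard norm, so the ellipsoid is a round disk.
-/

section CenterOfSymmetry

variable {V : Type*} [NormedAddCommGroup V] [NormedSpace ℝ V] {s : Set V}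

theorem eq_zero_of_isBounded_of_add_mem (hs : Bornology.IsBounded s) (hne : s.Nonempty)
    {v : V} (hv : ∀ x ∈ s, x + v ∈ s) : v = 0 := by
  obtain ⟨x, hx⟩ := hne
  have hiter : ∀ k : ℕ, x + k • v ∈ s := by
    intro k
    induction k with
    | zero => simpa using hx
    | succ k ih => simpa [succ_nsmul, add_assoc] using hv _ ih
  obtain ⟨r, hr⟩ := hs.subset_closedBall x
  have hbound : ∀ k : ℕ, (k : ℝ) * ‖v‖ ≤ r := fun k => by
    simpa [dist_eq_norm, RCLike.norm_nsmul ℝ] using hr (hiter k)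
  by_contra hv0
  obtain ⟨k, hk⟩ := exists_nat_gt (r / ‖v‖)
  rw [div_lt_iff₀ (norm_pos_iff.mpr hv0)] at hk
  linarith [hbound k]

/-- Reflecting through `c` and then through `c'` translates by `2 • (c' - c)`. -/
theorem eq_of_isBounded_of_symmetric (hs : Bornology.IsBounded s) (hne : s.Nonempty) {c c' : V}
    (hc : ∀ x ∈ s, 2 • c - x ∈ s) (hc' : ∀ x ∈ s, 2 • c' - x ∈ s) : c = c' := by
  have hv : ∀ x ∈ s, x + 2 • (c' - c) ∈ s := fun x hx => by
    convert hc' _ (hc x hx) using 1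
    simp only [smul_sub]
    abel
  have h := eq_zero_of_isBounded_of_add_mem hs hne hv
  rw [← Nat.cast_smul_eq_nsmul ℝ, smul_eq_zero] at h
  exact (sub_eq_zero.mp (h.resolve_left (by norm_num))).symm

end CenterOfSymmetry

theorem norm_le_of_forall_norm_le_one_imp {E F G : Type*} [SeminormedAddCommGroup E]
    [NormedSpace ℝ E] [SeminormedAddCommGroup F] [NormedSpace ℝ F] [SeminormedAddCommGroup G]
    [NormedSpace ℝ G] (f : E →ₗ[ℝ] F) (g : E →ₗ[ℝ] G) (h : ∀ x, ‖g x‖ ≤ 1 → ‖f x‖ ≤ 1)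
    (x : E) : ‖f x‖ ≤ ‖g x‖ := by
  have hscale : ∀ t : ℝ, 0 ≤ t → t * ‖g x‖ ≤ 1 → t * ‖f x‖ ≤ 1 := fun t ht hgt => by
    simpa [norm_smul, abs_of_nonneg ht] using h (t • x) (by simpa [norm_smul, abs_of_nonneg ht])
  rcases (norm_nonneg (g x)).eq_or_lt with hg | hg
  · by_contra! hfg
    have := hscale (2 / ‖f x‖) (by positivity) (by rw [← hg]; simp)
    rw [div_mul_cancel₀ _ (by linarith)] at this
    linarith
  · have := hscale ‖g x‖⁻¹ (by positivity) (by rw [inv_mul_cancel₀ hg.ne'])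
    rwa [inv_mul_le_iff₀ hg, mul_one] at this

theorem AffineEquiv.mem_image_closedBall_iff {V : Type*} [NormedAddCommGroup V]
    [NormedSpace ℝ V] (F : V ≃ᵃ[ℝ] V) (x : V) :
    x ∈ F '' closedBall 0 1 ↔ ‖F.linear.symm (x - F 0)‖ ≤ 1 := by
  have hF : ∀ y, F y = F.linear y + F 0 := fun y => by simpa using F.map_vadd 0 y
  rw [← mem_closedBall_zero_iff]
  constructor
  · rintro ⟨y, hy, rfl⟩
    rwa [hF y, add_sub_cancel_right, LinearEquiv.symm_apply_apply]
  · intro hx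
    exact ⟨_, hx, by rw [hF (F.linear.symm _), LinearEquiv.apply_symm_apply, sub_add_cancel]⟩

theorem AffineEquiv.linearMap_apply_zero_eq_of_image_eq {V : Type*} [NormedAddCommGroup V]
    [NormedSpace ℝ V] [FiniteDimensional ℝ V] (F : V ≃ᵃ[ℝ] V) (R : V →ₗ[ℝ] V)
    (hR : R '' (F '' closedBall 0 1) = F '' closedBall 0 1) : R (F 0) = F 0 := by
  set E := F '' closedBall 0 1
  have hbdd : Bornology.IsBounded E :=
    ((isCompact_closedBall 0 1).image F.toAffineMap.continuous_of_finiteDimensional).isBounded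
  have hsymm : ∀ x ∈ E, 2 • F 0 - x ∈ E := fun x hx => by
    rw [F.mem_image_closedBall_iff] at hx ⊢
    rwa [two_nsmul, add_sub_right_comm, add_sub_cancel_right, ← neg_sub, map_neg, norm_neg]
  have hRsymm : ∀ x ∈ E, 2 • R (F 0) - x ∈ E := by
    rw [← hR]
    rintro _ ⟨y, hy, rfl⟩
    exact ⟨2 • F 0 - y, hsymm y hy, by rw [map_sub, map_nsmul]⟩
  exact eq_of_isBounded_of_symmetric hbdd ⟨F 0, by simp [E]⟩ hRsymm hsymm

theorem norm_apply_map_eq_of_image_eq {E F : Type*} [SeminormedAddCommGroup E] [NormedSpace ℝ E]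
    [SeminormedAddCommGroup F] [NormedSpace ℝ F] (T : E →ₗ[ℝ] F) {R : E →ₗ[ℝ] E}
    (hR : Function.Injective R) (h : R '' {x | ‖T x‖ ≤ 1} = {x | ‖T x‖ ≤ 1}) (x : E) :
    ‖T (R x)‖ = ‖T x‖ := by
  have hmem : ∀ x, ‖T (R x)‖ ≤ 1 ↔ ‖T x‖ ≤ 1 := fun x => by
    have := hR.mem_set_image (s := {x | ‖T x‖ ≤ 1}) (a := x)
    rw [h] at this
    exact this
  exact le_antisymm (norm_le_of_forall_norm_le_one_imp (T ∘ₗ R) T (fun y => (hmem y).mpr) x)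
    (norm_le_of_forall_norm_le_one_imp T (T ∘ₗ R) (fun y => (hmem y).mp) x)

theorem norm_sq_smul_add_smul {F : Type*} [NormedAddCommGroup F] [InnerProductSpace ℝ F]
    (a b : ℝ) (u v : F) :
    ‖a • u + b • v‖ ^ 2 = a ^ 2 * ‖u‖ ^ 2 + 2 * a * b * inner ℝ u v + b ^ 2 * ‖v‖ ^ 2 := by
  rw [norm_add_sq_real, norm_smul, norm_smul, real_inner_smul_left, real_inner_smul_right,
    mul_pow, mul_pow, Real.norm_eq_abs, Real.norm_eq_abs, sq_abs, sq_abs]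
  ring

theorem Euc.norm_sq_fin_two (x : Euc 2) : ‖x‖ ^ 2 = x 0 ^ 2 + x 1 ^ 2 := by
  simp [EuclideanSpace.norm_sq_eq, Fin.sum_univ_two]

theorem Euc.eq_smul_single_add_smul_single (x : Euc 2) :
    x = x 0 • EuclideanSpace.single 0 1 + x 1 • EuclideanSpace.single 1 1 := by
  ext i
  fin_cases i <;> simp

def IsRotation (θ : ℝ) (R : Euc 2 →ₗ[ℝ] Euc 2) : Prop :=
  ∀ x : Euc 2,
    R x 0 = Real.cos θ * x 0 - Real.sin θ * x 1 ∧ R x 1 = Real.sin θ * x 0 + Real.cos θ * x 1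

namespace IsRotation

variable {θ : ℝ} {R : Euc 2 →ₗ[ℝ] Euc 2}

theorem norm_map (hR : IsRotation θ R) (x : Euc 2) : ‖R x‖ = ‖x‖ := by
  have hsq : ‖R x‖ ^ 2 = ‖x‖ ^ 2 := by
    obtain ⟨h0, h1⟩ := hR x
    rw [Euc.norm_sq_fin_two, Euc.norm_sq_fin_two, h0, h1]
    linear_combination (x 0 ^ 2 + x 1 ^ 2) * Real.sin_sq_add_cos_sq θ
  exact (sq_eq_sq₀ (norm_nonneg _) (norm_nonneg _)).mp hsq

theorem injective (hR : IsRotation θ R) : Function.Injective R := by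
  refine (injective_iff_map_eq_zero R).mpr fun x hx => ?_
  rw [← norm_eq_zero, ← hR.norm_map, hx, norm_zero]

theorem eq_zero_of_apply_eq_self (hR : IsRotation θ R) (hθ : Real.sin θ ≠ 0) {x : Euc 2}
    (hx : R x = x) : x = 0 := by
  obtain ⟨h0, h1⟩ := hR x
  rw [hx] at h0 h1
  have hpyth := Real.sin_sq_add_cos_sq θ
  have hc : 2 - 2 * Real.cos θ ≠ 0 := fun hc => hθ (by nlinarith)
  have hx0 : (2 - 2 * Real.cos θ) * x 0 = 0 := by
    linear_combination (1 - Real.cos θ) * h0 - Real.sin θ * h1 - x 0 * hpyth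
  have hx1 : (2 - 2 * Real.cos θ) * x 1 = 0 := by
    linear_combination Real.sin θ * h0 + (1 - Real.cos θ) * h1 - x 1 * hpyth
  ext i
  fin_cases i
  · simpa [hc] using hx0
  · simpa [hc] using hx1

theorem norm_apply_eq_of_norm_apply_map {F : Type*} [NormedAddCommGroup F]
    [InnerProductSpace ℝ F] (hR : IsRotation θ R) (hθ : Real.sin θ ≠ 0) (T : Euc 2 →ₗ[ℝ] F)
    (hT : ∀ x, ‖T (R x)‖ = ‖T x‖) (x : Euc 2) :
    ‖T x‖ = ‖T (EuclideanSpace.single 0 1)‖ * ‖x‖ := by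
  set u := T (EuclideanSpace.single 0 1)
  set v := T (EuclideanSpace.single 1 1)
  set Q : ℝ → ℝ → ℝ := fun a b => a ^ 2 * ‖u‖ ^ 2 + 2 * a * b * inner ℝ u v + b ^ 2 * ‖v‖ ^ 2
  have hQ : ∀ y : Euc 2, ‖T y‖ ^ 2 = Q (y 0) (y 1) := fun y => by
    conv_lhs => rw [Euc.eq_smul_single_add_smul_single y]
    rw [map_add, map_smul, map_smul, norm_sq_smul_add_smul]
  have hQR : ∀ y : Euc 2, Q (R y 0) (R y 1) = Q (y 0) (y 1) := fun y => by
    rw [← hQ, ← hQ, hT]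
  -- Invariance at `e₀` and at `e₀ + e₁` gives two linear equations in `⟪u, v⟫` and
  -- `‖v‖² - ‖u‖²` whose determinant is `4 sin² θ`.
  have e1 := hQR (EuclideanSpace.single 0 1)
  have e2 := hQR (EuclideanSpace.single 0 1 + EuclideanSpace.single 1 1)
  simp only [(hR _).1, (hR _).2] at e1 e2
  simp only [Fin.isValue, PiLp.single_eq_same, mul_one, ne_eq, one_ne_zero, not_false_eq_true,
    PiLp.single_eq_of_ne, mul_zero, sub_zero, add_zero, one_pow, one_mul, zero_mul,
    OfNat.ofNat_ne_zero, zero_pow, PiLp.add_apply, zero_ne_one, zero_add, Q] at e1 e2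
  have hpyth := Real.sin_sq_add_cos_sq θ
  have huv : inner ℝ u v = 0 := by
    refine (mul_eq_zero.mp ?_).resolve_left hθ
    linear_combination Real.cos θ / 2 * e1 - Real.sin θ / 4 * e2 + (-(Real.cos θ * ‖u‖ ^ 2) / 2
      + Real.sin θ * (‖u‖ ^ 2 + ‖v‖ ^ 2 + 2 * inner ℝ u v) / 4 - Real.sin θ * inner ℝ u v) * hpyth
  have hvu : ‖v‖ ^ 2 = ‖u‖ ^ 2 := by
    have : Real.sin θ ^ 2 * (‖v‖ ^ 2 - ‖u‖ ^ 2) = 0 := by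
      linear_combination e1 - ‖u‖ ^ 2 * hpyth - 2 * Real.cos θ * Real.sin θ * huv
    linarith [(mul_eq_zero.mp this).resolve_left (pow_ne_zero 2 hθ)]
  refine (sq_eq_sq₀ (norm_nonneg _) (by positivity)).mp ?_
  rw [hQ, mul_pow, Euc.norm_sq_fin_two]
  simp only [Q, huv, hvu]
  ring

end IsRotation

theorem Real.sin_two_pi_div_pos {n : ℕ} (hn : 3 ≤ n) : 0 < Real.sin (2 * Real.pi / n) := by
  have hn' : (3 : ℝ) ≤ n := by exact_mod_cast hn
  apply Real.sin_pos_of_pos_of_lt_pi (div_pos Real.two_pi_pos (by linarith))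
  rw [div_lt_iff₀ (by linarith)]
  nlinarith [Real.pi_pos]

theorem stmt_15 (n : ℕ) (hn : 3 ≤ n) (R : Euc 2 →ₗ[ℝ] Euc 2)
    (hR : ∀ x : Euc 2,
      R x 0 = Real.cos (2 * Real.pi / n) * x 0 - Real.sin (2 * Real.pi / n) * x 1 ∧
      R x 1 = Real.sin (2 * Real.pi / n) * x 0 + Real.cos (2 * Real.pi / n) * x 1)
    (E : Set (Euc 2)) (hE : IsEllipsoid E) (hinv : R '' E = E) :
    ∃ r : ℝ, 0 < r ∧ E = closedBall (0 : Euc 2) r := by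
  obtain ⟨F, rfl⟩ := hE
  have hRot : IsRotation (2 * Real.pi / n) R := hR
  have hθ := (Real.sin_two_pi_div_pos hn).ne'
  have hc : F 0 = 0 :=
    hRot.eq_zero_of_apply_eq_self hθ (F.linearMap_apply_zero_eq_of_image_eq R hinv)
  set T : Euc 2 →ₗ[ℝ] Euc 2 := F.linear.symm.toLinearMap
  have hE : F '' closedBall 0 1 = {x | ‖T x‖ ≤ 1} := by
    ext x
    rw [F.mem_image_closedBall_iff, hc, sub_zero]
    rfl
  rw [hE] at hinv ⊢
  have hTx := hRot.norm_apply_eq_of_norm_apply_map hθ T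
    (norm_apply_map_eq_of_image_eq T hRot.injective hinv)
  have hpos : 0 < ‖T (EuclideanSpace.single 0 1)‖ := norm_pos_iff.mpr (by simp [T])
  refine ⟨‖T (EuclideanSpace.single 0 1)‖⁻¹, inv_pos.mpr hpos, Set.ext fun x => ?_⟩
  rw [mem_ofPred_eq, hTx, mem_closedBall_zero_iff, ← one_div, le_div_iff₀ hpos, mul_comm]
end
end
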